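/- Let p be a prime element of 𝒪 with p ≡ 1 (mod 3), let k ≥ 1 be an integer, and let m, b, w ∈ 𝒪 with mbw coprime to p. For 0 ≤ r ≤ k set Σ_r := ∑_{y (p^k)*, 3³·b·w·y ≡ m³ (mod p^r)} (y/p^k)₃ · e(y/p^k). Then: (i) if k > 1, Σ_r = 0 for every 0 ≤ r < k, and consequently (w/p^k)₃ · ∑_{r=0}^{k} μ(p^{k−r})·N(p^r)·Σ_r = N(p^k)·(b⁻¹/p^k)₃·e(m³·(3³·b·w)⁻¹/p^k); (ii) if k = 1, then (w/p)₃ · ∑_{r=0}^{1} μ(p^{1−r})·N(p^r)·Σ_r = N(p)·(b⁻¹/p)₃·e(m³·(3³·b·w)⁻¹/p) + (w/p)₃·μ(p)·g(1,p). -/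

import Mathlib

/-!
For `r < k` with `k > 1`, the translation `y ↦ y + p^(k-1) c` permutes the units modulo `p^k`,
preserves the congruence condition modulo `p^r` and the cubic character (which only sees `y`
modulo `p`), and multiplies `e(y/p^k)` by `e(c/p)`; choosing `c` with `e(c/p) ≠ 1` forces
`Σ_r = 0`. For `r = k` the condition pins `y` down to the single class `y₀ = m³ (3³bw)⁻¹`, and
`(w/p)₃ (y₀/p)₃ = (b⁻¹/p)₃` because `(3/p)₃³ = (m/p)₃³ = 1`. For `k = 1` the remaining term `Σ₀`
is the Gauss sum `g(1,p)`.
-/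

noncomputable section

namespace CubicSeries

open scoped Classical

def ω : ℂ := Complex.exp (2 * Real.pi * Complex.I / 3)

def O : Subring ℂ := Subring.closure {ω}

abbrev OK : Type _ := O

def δ : ℂ := ω - ω ^ 2

def eC (z : ℂ) : ℂ :=
  Complex.exp (2 * Real.pi * Complex.I * (z / δ + (starRingEnd ℂ) (z / δ)))

def rep {I : Ideal OK} (x : OK ⧸ I) : OK :=
  Function.surjInv Ideal.Quotient.mk_surjective x

/-- `N(c) = |𝒪/(c)|`, the absolute norm. -/
def Nm (c : OK) : ℕ := Nat.card (OK ⧸ Ideal.span {c})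

/-- `φ(c) = |(𝒪/(c))ˣ|`. -/
def totient (c : OK) : ℕ := Nat.card ((OK ⧸ Ideal.span {c})ˣ)

/-- a multiplicative inverse modulo `c` (an arbitrary element when `x` is not invertible). -/
def invMod (c x : OK) : OK :=
  rep (Ring.inverse (Ideal.Quotient.mk (Ideal.span {c}) x))

def T (A B c : OK) : ℂ :=
  ∑ᶠ x : OK ⧸ Ideal.span {c}, eC (((A * rep x ^ 3 + B * rep x : OK) : ℂ) / (c : ℂ))

/-- The cubic residue symbol `(x/π)₃` for a prime element `π` not dividing `3`:
the unique cube root of unity congruent to `x^{(N(π)-1)/3}` mod `π`, and `0` if `π ∣ x`. -/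
def cubicCharP (π x : OK) : OK :=
  if h : ∃ ζ : OK, ζ ^ 3 = 1 ∧ π ∣ ζ - x ^ ((Nm π - 1) / 3) ∧ ¬ π ∣ x then h.choose else 0

/-- The cubic residue symbol `(x/c)₃` for `c` coprime to `3`, defined via a factorization of
`c` into a unit times prime elements (with multiplicity). -/
def cubicChar (c x : OK) : OK :=
  if h : ∃ fs : OKˣ × Multiset OK, (∀ π ∈ fs.2, Prime π) ∧ c = (fs.1 : OK) * fs.2.prod
  then (h.choose.2.map fun π => cubicCharP π x).prod
  else 0

/-- The cubic Gauss sum `g(a,c) = ∑_{x (c)*} (x/c)₃ e(ax/c)`. -/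
def gaussSum (a c : OK) : ℂ :=
  ∑ᶠ u : (OK ⧸ Ideal.span {c})ˣ,
    ((cubicChar c (rep u.val) : OK) : ℂ) * eC (((a * rep u.val : OK) : ℂ) / (c : ℂ))

/-- The Möbius function: `μ(c) = (−1)^r` if `(c)` is a product of `r` distinct prime ideals,
and `μ(c) = 0` otherwise. -/
def moebius (c : OK) : ℤ :=
  if h : ∃ s : Finset (Ideal OK), (∀ P ∈ s, Prime P) ∧ Ideal.span {c} = ∏ P ∈ s, P
  then (-1) ^ h.choose.card
  else 0

/-- `p^n` modulo `c`, where a negative exponent means the inverse of `p^{-n}` mod `c`. -/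
def ppow (c p : OK) (n : ℤ) : OK :=
  if 0 ≤ n then p ^ n.toNat else invMod c (p ^ (-n).toNat)

/-- A choice of generator of a (principal) ideal. -/
def gen (J : Ideal OK) : OK := if h : ∃ q : OK, Ideal.span {q} = J then h.choose else 0

/-- A choice of cofactor: `cofactor c q` is a `d` with `c = q·d`, when one exists. -/
def cofactor (c q : OK) : OK := if h : ∃ d : OK, c = q * d then h.choose else 0


/-- The restricted sum `Σ_r` of Statement 12. -/
def Sig (p m b w : OK) (k r : ℕ) : ℂ :=
  ∑ᶠ u : (OK ⧸ Ideal.span {p ^ k})ˣ,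
    if p ^ r ∣ 3 ^ 3 * b * w * rep u.val - m ^ 3 then
      ((cubicCharP p (rep u.val) ^ k : OK) : ℂ) *
        eC (((rep u.val : OK) : ℂ) / ((p ^ k : OK) : ℂ))
    else 0


open ComplexConjugate

lemma omega_pow_three : ω ^ 3 = 1 := by
  rw [ω, ← Complex.exp_nat_mul,
    show ((3 : ℕ) : ℂ) * (2 * Real.pi * Complex.I / 3) = 2 * Real.pi * Complex.I by push_cast; ring]
  exact Complex.exp_two_pi_mul_I

lemma omega_ne_one : ω ≠ 1 := by
  rw [Ne, ω, Complex.exp_eq_one_iff]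
  rintro ⟨n, hn⟩
  have h : (1 : ℂ) = 3 * n := by
    apply mul_left_cancel₀ (by simp [Real.pi_ne_zero] : 2 * (Real.pi : ℂ) * Complex.I ≠ 0)
    linear_combination 3 * hn
  have : (1 : ℤ) = 3 * n := by exact_mod_cast h
  omega

lemma omega_sq_add_omega_add_one : ω ^ 2 + ω + 1 = 0 := by
  have h : (ω - 1) * (ω ^ 2 + ω + 1) = 0 := by linear_combination omega_pow_three
  exact (mul_eq_zero.mp h).resolve_left (sub_ne_zero.mpr omega_ne_one)

lemma conj_omega : conj ω = ω ^ 2 := by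
  have h : conj ω * ω = 1 := by
    rw [ω, ← Complex.exp_conj, ← Complex.exp_add, map_div₀, map_mul, map_mul, Complex.conj_I,
      Complex.conj_ofReal, map_ofNat, map_ofNat, ← Complex.exp_zero]
    ring_nf
  have hω : ω ≠ 0 := Complex.exp_ne_zero _
  apply mul_right_cancel₀ hω
  rw [h, ← pow_succ, omega_pow_three]

lemma delta_ne_zero : δ ≠ 0 := by
  rw [δ, sub_ne_zero]
  intro h
  have : ω * (ω - 1) = 0 := by linear_combination -h
  rcases mul_eq_zero.mp this with h0 | h1
  · exact Complex.exp_ne_zero _ h0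
  · exact omega_ne_one (sub_eq_zero.mp h1)

lemma conj_delta : conj δ = -δ := by
  rw [δ, map_sub, map_pow, conj_omega, ← pow_mul]
  linear_combination -ω * omega_pow_three

lemma mem_O_iff {z : ℂ} : z ∈ O ↔ ∃ a b : ℤ, z = a + b * ω := by
  constructor
  · intro hz
    induction hz using Subring.closure_induction with
    | mem x hx => exact ⟨0, 1, by simp [Set.mem_singleton_iff.mp hx]⟩
    | zero => exact ⟨0, 0, by simp⟩
    | one => exact ⟨1, 0, by simp⟩
    | add x y _ _ hx hy =>
        obtain ⟨a, b, rfl⟩ := hx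
        obtain ⟨c, d, rfl⟩ := hy
        exact ⟨a + c, b + d, by push_cast; ring⟩
    | neg x _ hx =>
        obtain ⟨a, b, rfl⟩ := hx
        exact ⟨-a, -b, by push_cast; ring⟩
    | mul x y _ _ hx hy =>
        obtain ⟨a, b, rfl⟩ := hx
        obtain ⟨c, d, rfl⟩ := hy
        exact ⟨a * c - b * d, a * d + b * c - b * d, by
          push_cast; linear_combination (b * d : ℂ) * omega_sq_add_omega_add_one⟩
  · rintro ⟨a, b, rfl⟩
    exact add_mem (intCast_mem O a) (mul_mem (intCast_mem O b) (Subring.subset_closure rfl))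

def ωO : OK := ⟨ω, Subring.subset_closure rfl⟩

instance : Module.Finite ℤ OK := by
  refine Module.Finite.of_fg_top ⟨{1, ωO}, eq_top_iff.mpr fun x _ => ?_⟩
  obtain ⟨a, b, hx⟩ := mem_O_iff.mp x.2
  rw [Finset.coe_pair, Submodule.mem_span_pair]
  exact ⟨a, b, Subtype.ext (by simp [hx, ωO])⟩

lemma finite_quotient_span_singleton {c : OK} (hc : c ≠ 0) : Finite (OK ⧸ Ideal.span {c}) :=
  have : Module.Free ℤ OK := Module.free_of_finite_type_torsion_free'
  Ideal.finiteQuotientOfFreeOfNeBot _ (by simpa using hc)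

lemma eC_add (x y : ℂ) : eC (x + y) = eC x * eC y := by
  rw [eC, eC, eC, ← Complex.exp_add, add_div, map_add]
  ring_nf

lemma eC_eq_one_iff {z : ℂ} : eC z = 1 ↔ ∃ n : ℤ, z - conj z = n * δ := by
  have hδ := delta_ne_zero
  have htr : z / δ + conj (z / δ) = (z - conj z) / δ := by
    rw [map_div₀, conj_delta]; field_simp; ring
  rw [eC, htr, Complex.exp_eq_one_iff]
  refine exists_congr fun n => ?_
  rw [← div_eq_iff hδ]
  constructor <;> intro h
  · exact mul_left_cancel₀ (by simp [Real.pi_ne_zero]) (h.trans (by ring))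
  · rw [h]; ring

lemma eC_coe (x : OK) : eC x = 1 := by
  obtain ⟨a, b, hx⟩ := mem_O_iff.mp x.2
  refine eC_eq_one_iff.mpr ⟨b, ?_⟩
  rw [hx, map_add, map_mul, conj_omega, δ]
  simp only [map_intCast]
  ring

lemma eC_div_congr {c x y : OK} (hc : c ≠ 0) (h : c ∣ x - y) :
    eC ((x : ℂ) / c) = eC ((y : ℂ) / c) := by
  obtain ⟨d, hd⟩ := h
  have hc' : (c : ℂ) ≠ 0 := by exact_mod_cast hc
  have hx : (x : ℂ) / c = d + y / c := by
    have hd' : (x : ℂ) - y = c * d := by exact_mod_cast congrArg Subtype.val hd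
    field_simp
    linear_combination hd'
  rw [hx, eC_add, eC_coe, one_mul]

/-- The additive character `x ↦ e(x/c)` is nontrivial modulo a nonunit `c`: otherwise
`1/c` and `ω/c` would both have integral trace pairing, forcing `1/c ∈ 𝒪`. -/
lemma exists_eC_div_ne_one {c : OK} (hc : c ≠ 0) (hcu : ¬IsUnit c) :
    ∃ y : OK, eC ((y : ℂ) / c) ≠ 1 := by
  by_contra! hall
  have hc' : (c : ℂ) ≠ 0 := by exact_mod_cast hc
  obtain ⟨n₁, h₁⟩ := eC_eq_one_iff.mp (hall 1)
  obtain ⟨n₂, h₂⟩ := eC_eq_one_iff.mp (hall ωO)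
  set z : ℂ := (c : ℂ)⁻¹
  have h₁' : z - conj z = n₁ * δ := by simpa [z] using h₁
  have h₂' : z * ω - conj z * ω ^ 2 = n₂ * δ := by
    simpa [z, ωO, conj_omega, div_eq_mul_inv, mul_comm] using h₂
  have hδ : δ = ω - ω ^ 2 := rfl
  have hz : z = n₂ - n₁ * ω ^ 2 := by
    apply mul_right_cancel₀ delta_ne_zero
    linear_combination h₂' - ω ^ 2 * h₁' + z * hδ
  have hzO : z ∈ O := mem_O_iff.mpr ⟨n₂ + n₁, n₁, by
    rw [hz]; push_cast; linear_combination (-n₁ : ℂ) * omega_sq_add_omega_add_one⟩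
  exact hcu (IsUnit.of_mul_eq_one (b := ⟨z, hzO⟩) (Subtype.ext (mul_inv_cancel₀ hc')))

lemma ωO_pow_three : ωO ^ 3 = 1 := Subtype.ext omega_pow_three

lemma ωO_sq_add_ωO_add_one : ωO ^ 2 + ωO + 1 = 0 := Subtype.ext omega_sq_add_omega_add_one

lemma ωO_ne_one : ωO ≠ 1 := fun h => omega_ne_one (congrArg Subtype.val h)

lemma mk_rep {I : Ideal OK} (x : OK ⧸ I) : Ideal.Quotient.mk I (rep x) = x :=
  Function.surjInv_eq Ideal.Quotient.mk_surjective x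

lemma mk_eq_mk_iff_dvd {c x y : OK} :
    Ideal.Quotient.mk (Ideal.span {c}) x = Ideal.Quotient.mk (Ideal.span {c}) y ↔ c ∣ x - y := by
  rw [Ideal.Quotient.mk_eq_mk_iff_sub_mem, Ideal.mem_span_singleton]

lemma isUnit_mk_of_isCoprime {c x : OK} (h : IsCoprime x c) :
    IsUnit (Ideal.Quotient.mk (Ideal.span {c}) x) := by
  obtain ⟨a, d, had⟩ := h
  refine .of_mul_eq_one (Ideal.Quotient.mk _ a) ?_
  rw [← map_mul, ← map_one (Ideal.Quotient.mk _), mk_eq_mk_iff_dvd]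
  exact ⟨-d, by linear_combination had⟩

lemma mk_invMod {c x : OK} :
    Ideal.Quotient.mk (Ideal.span {c}) (invMod c x) = Ring.inverse (Ideal.Quotient.mk _ x) :=
  mk_rep _

lemma dvd_mul_invMod_sub_one {c x : OK} (h : IsCoprime x c) : c ∣ x * invMod c x - 1 := by
  rw [← mk_eq_mk_iff_dvd, map_mul, mk_invMod, Ring.mul_inverse_cancel _ (isUnit_mk_of_isCoprime h),
    map_one]

lemma pow_natCard_sub_one_eq_one {R : Type*} [CommRing R] [IsDomain R] [Finite R] {x : R}
    (hx : x ≠ 0) : x ^ (Nat.card R - 1) = 1 := by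
  let := (Finite.isField_of_domain R).toField
  have := Fintype.ofFinite R
  rw [Nat.card_eq_fintype_card]
  exact FiniteField.pow_card_sub_one_eq_one x hx

/-- If `ζ ≠ ζ'`, then `ζ² + ζζ' + ζ'² = 0`, which is `3ζ'²` modulo `ζ - ζ'`. -/
lemma eq_of_pow_three_eq_one_of_dvd_sub {R : Type*} [CommRing R] [IsDomain R] {p ζ ζ' : R}
    (hp3 : ¬p ∣ 3) (hζ : ζ ^ 3 = 1) (hζ' : ζ' ^ 3 = 1) (h : p ∣ ζ - ζ') : ζ = ζ' := by
  by_contra hne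
  have hsum : ζ ^ 2 + ζ * ζ' + ζ' ^ 2 = 0 := by
    refine (mul_eq_zero.mp ?_).resolve_left (sub_ne_zero.mpr hne)
    linear_combination hζ - hζ'
  have h3 : p ∣ 3 * ζ' ^ 2 := by
    have : 3 * ζ' ^ 2 = (ζ ^ 2 + ζ * ζ' + ζ' ^ 2) - (ζ - ζ') * (ζ + 2 * ζ') := by ring
    rw [this, hsum, zero_sub, dvd_neg]
    exact h.mul_right _
  exact hp3 (((IsUnit.of_pow_eq_one hζ' three_ne_zero).pow 2).dvd_mul_right.mp h3)

section CubicResidueSymbol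

variable {p : OK}

lemma cubicCharP_eq_zero {x : OK} (hx : p ∣ x) : cubicCharP p x = 0 :=
  dif_neg fun h => h.choose_spec.2.2 hx

lemma pow_Nm_sub_one_sub_one_dvd (hp : Prime p) {x : OK} (hx : ¬p ∣ x) :
    p ∣ x ^ (Nm p - 1) - 1 := by
  have := (Ideal.span_singleton_prime hp.ne_zero).mpr hp
  have := finite_quotient_span_singleton hp.ne_zero
  rw [← mk_eq_mk_iff_dvd, map_pow, map_one]
  exact pow_natCard_sub_one_eq_one fun h => hx ((Ideal.Quotient.eq_zero_iff_dvd _ _).mp h)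

variable (hp : Prime p) (hp3 : ¬p ∣ 3)
include hp hp3

lemma three_dvd_Nm_sub_one : 3 ∣ Nm p - 1 := by
  have := (Ideal.span_singleton_prime hp.ne_zero).mpr hp
  have := finite_quotient_span_singleton hp.ne_zero
  have h3 : (Ideal.Quotient.mk (Ideal.span {p}) ωO) ^ 3 = 1 := by
    rw [← map_pow, ωO_pow_three, map_one]
  have h1 : Ideal.Quotient.mk (Ideal.span {p}) ωO ≠ 1 := by
    rw [← map_one (Ideal.Quotient.mk _), Ne, mk_eq_mk_iff_dvd]
    exact fun h => ωO_ne_one (eq_of_pow_three_eq_one_of_dvd_sub hp3 ωO_pow_three (one_pow 3) h)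
  have := Fact.mk Nat.prime_three
  rw [← orderOf_eq_prime h3 h1]
  exact orderOf_dvd_of_pow_eq_one (pow_natCard_sub_one_eq_one (left_ne_zero_of_mul_eq_one
    (show _ * (Ideal.Quotient.mk (Ideal.span {p}) ωO) ^ 2 = 1 by rw [← pow_succ', h3])))

/-- `x ^ ((N p - 1) / 3)` is a root of `X³ - 1 = (X - 1)(X - ω)(X - ω²)` modulo `p`. -/
lemma exists_pow_three_eq_one_dvd_sub {x : OK} (hx : ¬p ∣ x) :
    ∃ ζ : OK, ζ ^ 3 = 1 ∧ p ∣ ζ - x ^ ((Nm p - 1) / 3) := by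
  set y := x ^ ((Nm p - 1) / 3)
  have hy : p ∣ (1 - y) * ((ωO - y) * (ωO ^ 2 - y)) := by
    have hfac : (1 - y) * ((ωO - y) * (ωO ^ 2 - y)) = 1 - y ^ 3 := by
      linear_combination (1 - y) * ωO_pow_three - (y - y ^ 2) * ωO_sq_add_ωO_add_one
    rw [hfac, dvd_sub_comm, ← pow_mul, Nat.div_mul_cancel (three_dvd_Nm_sub_one hp hp3)]
    exact pow_Nm_sub_one_sub_one_dvd hp hx
  rcases hp.dvd_or_dvd hy with h | h
  · exact ⟨1, one_pow 3, h⟩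
  rcases hp.dvd_or_dvd h with h | h
  · exact ⟨ωO, ωO_pow_three, h⟩
  · exact ⟨ωO ^ 2, by rw [← pow_mul, pow_mul', ωO_pow_three, one_pow], h⟩

lemma cubicCharP_spec {x : OK} (hx : ¬p ∣ x) :
    cubicCharP p x ^ 3 = 1 ∧ p ∣ cubicCharP p x - x ^ ((Nm p - 1) / 3) := by
  obtain ⟨ζ, hζ, hdvd⟩ := exists_pow_three_eq_one_dvd_sub hp hp3 hx
  have h : ∃ ζ : OK, ζ ^ 3 = 1 ∧ p ∣ ζ - x ^ ((Nm p - 1) / 3) ∧ ¬p ∣ x := ⟨ζ, hζ, hdvd, hx⟩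
  rw [cubicCharP, dif_pos h]
  exact ⟨h.choose_spec.1, h.choose_spec.2.1⟩

lemma cubicCharP_eq_of_dvd_sub {x ζ : OK} (hx : ¬p ∣ x) (hζ : ζ ^ 3 = 1)
    (h : p ∣ ζ - x ^ ((Nm p - 1) / 3)) : cubicCharP p x = ζ := by
  obtain ⟨hχ, hdvd⟩ := cubicCharP_spec hp hp3 hx
  exact eq_of_pow_three_eq_one_of_dvd_sub hp3 hχ hζ (by simpa using dvd_sub hdvd h)

lemma cubicCharP_congr {x y : OK} (h : p ∣ x - y) : cubicCharP p x = cubicCharP p y := by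
  by_cases hx : p ∣ x
  · rw [cubicCharP_eq_zero hx, cubicCharP_eq_zero (by simpa using dvd_sub hx h)]
  have hy : ¬p ∣ y := fun hy => hx (by simpa using dvd_add h hy)
  obtain ⟨hχ, hdvd⟩ := cubicCharP_spec hp hp3 hy
  refine cubicCharP_eq_of_dvd_sub hp hp3 hx hχ ?_
  have hpow := h.trans (sub_dvd_pow_sub_pow x y ((Nm p - 1) / 3))
  simpa using dvd_sub hdvd hpow

lemma cubicCharP_mul (x y : OK) : cubicCharP p (x * y) = cubicCharP p x * cubicCharP p y := by
  by_cases hx : p ∣ x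
  · rw [cubicCharP_eq_zero hx, cubicCharP_eq_zero (hx.mul_right y), zero_mul]
  by_cases hy : p ∣ y
  · rw [cubicCharP_eq_zero hy, cubicCharP_eq_zero (hy.mul_left x), mul_zero]
  obtain ⟨hχx, hdx⟩ := cubicCharP_spec hp hp3 hx
  obtain ⟨hχy, hdy⟩ := cubicCharP_spec hp hp3 hy
  refine cubicCharP_eq_of_dvd_sub hp hp3 (fun h => (hp.dvd_or_dvd h).elim hx hy)
    (by rw [mul_pow, hχx, hχy, one_mul]) ?_
  rw [mul_pow]
  have : cubicCharP p x * cubicCharP p y - x ^ ((Nm p - 1) / 3) * y ^ ((Nm p - 1) / 3) =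
      (cubicCharP p x - x ^ ((Nm p - 1) / 3)) * cubicCharP p y +
        x ^ ((Nm p - 1) / 3) * (cubicCharP p y - y ^ ((Nm p - 1) / 3)) := by ring
  rw [this]
  exact dvd_add (hdx.mul_right _) (hdy.mul_left _)

lemma cubicCharP_one : cubicCharP p 1 = 1 :=
  cubicCharP_eq_of_dvd_sub hp hp3 hp.not_dvd_one (one_pow 3) (by simp)

lemma cubicCharP_pow (x : OK) (n : ℕ) : cubicCharP p (x ^ n) = cubicCharP p x ^ n := by
  induction n with
  | zero => rw [pow_zero, pow_zero, cubicCharP_one hp hp3]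
  | succ n ih => rw [pow_succ, cubicCharP_mul hp hp3, ih, pow_succ]

end CubicResidueSymbol

lemma cubicCharP_of_associated {π p : OK} (h : Associated π p) : cubicCharP π = cubicCharP p := by
  have hN : Nm π = Nm p := by rw [Nm, Nm, Ideal.span_singleton_eq_span_singleton.mpr h]
  funext x
  simp only [cubicCharP, hN, h.dvd_iff_dvd_left]

lemma cubicChar_of_prime {p : OK} (hp : Prime p) : cubicChar p = cubicCharP p := by
  funext x
  unfold cubicChar
  split_ifs with hfs
  swap
  · exact absurd ⟨(1, {p}), by simpa using hp, by simp⟩ hfs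
  obtain ⟨hprime, hprod⟩ := hfs.choose_spec
  have hrel : Multiset.Rel Associated hfs.choose.2 (p ::ₘ 0) :=
    prime_factors_unique hprime (by simpa using hp)
      ⟨hfs.choose.1, by
        rw [Multiset.prod_cons, Multiset.prod_zero, mul_one, mul_comm]; exact hprod.symm⟩
  obtain ⟨π, s, hπ, hs, hfs_eq⟩ := Multiset.rel_cons_right.mp hrel
  rw [Multiset.rel_zero_right.mp hs] at hfs_eq
  rw [hfs_eq, Multiset.map_cons, Multiset.map_zero, Multiset.prod_cons, Multiset.prod_zero, mul_one,
    cubicCharP_of_associated hπ]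

lemma Nm_one : Nm 1 = 1 := by
  have : Subsingleton (OK ⧸ Ideal.span {(1 : OK)}) :=
    Ideal.Quotient.subsingleton_iff.mpr Ideal.span_singleton_one
  exact Nat.card_of_subsingleton (0 : OK ⧸ Ideal.span {(1 : OK)})

lemma moebius_one : moebius 1 = 1 := by
  have h : ∃ s : Finset (Ideal OK), (∀ P ∈ s, Prime P) ∧ Ideal.span {(1 : OK)} = ∏ P ∈ s, P :=
    ⟨∅, by simp, by simp [Ideal.one_eq_top]⟩
  rw [moebius, dif_pos h]
  obtain ⟨hprime, hprod⟩ := h.choose_spec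
  suffices h.choose = ∅ by rw [this, Finset.card_empty, pow_zero]
  refine Finset.eq_empty_of_forall_notMem fun P hP => (hprime P hP).not_dvd_one ?_
  rw [Ideal.one_eq_top, ← Ideal.span_singleton_one, hprod]
  exact Finset.dvd_prod_of_mem _ hP

lemma finsum_eq_zero_of_comp_equiv_eq_mul {α R : Type*} [Ring R] [NoZeroDivisors R] {g : α → R}
    (τ : α ≃ α) {E : R} (hE : E ≠ 1) (h : ∀ a, g (τ a) = E * g a) : ∑ᶠ a, g a = 0 := by
  have hfix : ∑ᶠ a, g a = E * ∑ᶠ a, g a := by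
    rw [mul_finsum, ← finsum_comp_equiv τ]
    exact finsum_congr h
  have : (E - 1) * ∑ᶠ a, g a = 0 := by rw [sub_mul, one_mul, ← hfix, sub_self]
  exact (mul_eq_zero.mp this).resolve_left (sub_ne_zero.mpr hE)

def unitsAddEquivOfIsNilpotent {R : Type*} [CommRing R] {n : R} (hn : IsNilpotent n) :
    Rˣ ≃ Rˣ where
  toFun u := (hn.isUnit_add_left_of_commute u.isUnit (Commute.all _ _)).unit
  invFun u := (hn.neg.isUnit_add_left_of_commute u.isUnit (Commute.all _ _)).unit
  left_inv u := Units.ext (by simp)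
  right_inv u := Units.ext (by simp)

lemma finsum_units_eq_zero_of_shift {q n : OK} (hn : q ∣ n ^ 2) {F : OK → ℂ}
    (hF : ∀ x y, q ∣ x - y → F x = F y) {E : ℂ} (hE : E ≠ 1) (hshift : ∀ x, F (x + n) = E * F x) :
    ∑ᶠ u : (OK ⧸ Ideal.span {q})ˣ, F (rep u.val) = 0 := by
  have hnil : IsNilpotent (Ideal.Quotient.mk (Ideal.span {q}) n) :=
    ⟨2, by rw [← map_pow, Ideal.Quotient.eq_zero_iff_dvd]; exact hn⟩
  refine finsum_eq_zero_of_comp_equiv_eq_mul (unitsAddEquivOfIsNilpotent hnil) hE fun u => ?_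
  rw [← hshift]
  apply hF
  rw [← mk_eq_mk_iff_dvd, map_add, mk_rep, mk_rep]
  rfl

lemma finsum_units_ite_dvd_mul_sub {q A B : OK} (hA : IsCoprime A q) (hB : IsCoprime B q)
    {F : OK → ℂ} (hF : ∀ x y, q ∣ x - y → F x = F y) :
    ∑ᶠ u : (OK ⧸ Ideal.span {q})ˣ, (if q ∣ A * rep u.val - B then F (rep u.val) else 0) =
      F (B * invMod q A) := by
  obtain ⟨d, hd⟩ := dvd_mul_invMod_sub_one hA
  have hiff : ∀ x, q ∣ A * x - B ↔ q ∣ x - B * invMod q A := fun x => by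
    constructor <;> rintro ⟨e, he⟩
    · exact ⟨invMod q A * e - x * d, by linear_combination invMod q A * he - x * hd⟩
    · exact ⟨A * e + B * d, by linear_combination A * he + B * hd⟩
  have hunit : IsUnit (Ideal.Quotient.mk (Ideal.span {q}) (B * invMod q A)) := by
    rw [map_mul, mk_invMod]
    exact (isUnit_mk_of_isCoprime hB).mul
      (.of_mul_eq_one_right _ (Ring.mul_inverse_cancel _ (isUnit_mk_of_isCoprime hA)))
  have hrep : q ∣ rep hunit.unit.val - B * invMod q A := by
    rw [← mk_eq_mk_iff_dvd, mk_rep, IsUnit.unit_spec]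
  rw [finsum_eq_single _ hunit.unit fun u hu => if_neg fun h => hu (Units.ext ?_),
    if_pos ((hiff _).mpr hrep), hF _ _ hrep]
  rw [IsUnit.unit_spec, ← mk_rep u.val, mk_eq_mk_iff_dvd]
  exact (hiff _).mp h

lemma eC_add_pow_mul_div_pow_succ {p : OK} (hp : p ≠ 0) (x c : OK) (j : ℕ) :
    eC (((x + p ^ j * c : OK) : ℂ) / ((p ^ (j + 1) : OK) : ℂ)) =
      eC ((c : ℂ) / p) * eC ((x : ℂ) / ((p ^ (j + 1) : OK) : ℂ)) := by
  have hp0 : (p : ℂ) ≠ 0 := by exact_mod_cast hp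
  rw [← eC_add]
  congr 1
  push_cast
  field_simp
  ring

def sigSummand (p m b w : OK) (k r : ℕ) (x : OK) : ℂ :=
  if p ^ r ∣ 3 ^ 3 * b * w * x - m ^ 3 then
    ((cubicCharP p x ^ k : OK) : ℂ) * eC ((x : ℂ) / ((p ^ k : OK) : ℂ))
  else 0

section RestrictedSums

variable {p m b w : OK} (hp : Prime p) (hp3 : ¬p ∣ 3)
include hp hp3

lemma cubicCharP_pow_mul_eC_congr {k : ℕ} {x y : OK} (h : p ^ k ∣ x - y) :
    ((cubicCharP p x ^ k : OK) : ℂ) * eC ((x : ℂ) / ((p ^ k : OK) : ℂ)) =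
      ((cubicCharP p y ^ k : OK) : ℂ) * eC ((y : ℂ) / ((p ^ k : OK) : ℂ)) := by
  rw [eC_div_congr (pow_ne_zero k hp.ne_zero) h]
  rcases k.eq_zero_or_pos with rfl | hk
  · simp
  · rw [cubicCharP_congr hp hp3 ((dvd_pow_self p hk.ne').trans h)]

lemma sigSummand_congr {k r : ℕ} (hr : r ≤ k) {x y : OK} (h : p ^ k ∣ x - y) :
    sigSummand p m b w k r x = sigSummand p m b w k r y := by
  rw [sigSummand, sigSummand, show 3 ^ 3 * b * w * x - m ^ 3 =
      3 ^ 3 * b * w * y - m ^ 3 + 3 ^ 3 * b * w * (x - y) by ring,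
    dvd_add_left (((pow_dvd_pow p hr).trans h).mul_left _), cubicCharP_pow_mul_eC_congr hp hp3 h]

lemma sigSummand_add_pow_mul {j r : ℕ} (hj : j ≠ 0) (hr : r ≤ j) (x c : OK) :
    sigSummand p m b w (j + 1) r (x + p ^ j * c) =
      eC ((c : ℂ) / p) * sigSummand p m b w (j + 1) r x := by
  have hpn : p ∣ x + p ^ j * c - x := by
    rw [add_sub_cancel_left]
    exact (dvd_pow_self p hj).mul_right c
  rw [sigSummand, sigSummand, show 3 ^ 3 * b * w * (x + p ^ j * c) - m ^ 3 =
      3 ^ 3 * b * w * x - m ^ 3 + 3 ^ 3 * b * w * (p ^ j * c) by ring,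
    dvd_add_left (((pow_dvd_pow p hr).mul_right c).mul_left _),
    eC_add_pow_mul_div_pow_succ hp.ne_zero, cubicCharP_congr hp hp3 hpn]
  split_ifs <;> ring

lemma Sig_eq_zero_of_lt {k r : ℕ} (hk : 1 < k) (hr : r < k) : Sig p m b w k r = 0 := by
  obtain ⟨j, rfl⟩ : ∃ j, k = j + 1 := ⟨k - 1, by omega⟩
  obtain ⟨c, hc⟩ := exists_eC_div_ne_one hp.ne_zero hp.not_isUnit
  refine finsum_units_eq_zero_of_shift (F := sigSummand p m b w (j + 1) r) (n := p ^ j * c) ?_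
    (fun x y h => sigSummand_congr hp hp3 hr.le h) hc
    (sigSummand_add_pow_mul hp hp3 (by omega) (by omega) · c)
  rw [mul_pow, ← pow_mul]
  exact (pow_dvd_pow p (by omega)).mul_right _

lemma cubicCharP_mul_cubicCharP_invMod {k : ℕ} (hk : k ≠ 0) (hA : IsCoprime (3 ^ 3 * b * w) p)
    (hb : IsCoprime b p) (hm : IsCoprime m p) :
    cubicCharP p w * cubicCharP p (m ^ 3 * invMod (p ^ k) (3 ^ 3 * b * w)) =
      cubicCharP p (invMod (p ^ k) b) := by
  have hpk : p ∣ p ^ k := dvd_pow_self p hk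
  have h₁ : p ∣ 3 ^ 3 * b * w * (m ^ 3 * invMod (p ^ k) (3 ^ 3 * b * w)) - m ^ 3 := by
    rw [show 3 ^ 3 * b * w * (m ^ 3 * invMod (p ^ k) (3 ^ 3 * b * w)) - m ^ 3 =
      m ^ 3 * (3 ^ 3 * b * w * invMod (p ^ k) (3 ^ 3 * b * w) - 1) by ring]
    exact (hpk.trans (dvd_mul_invMod_sub_one hA.pow_right)).mul_left _
  generalize m ^ 3 * invMod (p ^ k) (3 ^ 3 * b * w) = y at h₁ ⊢
  have h₂ := hpk.trans (dvd_mul_invMod_sub_one (c := p ^ k) hb.pow_right)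
  have e₁ := cubicCharP_congr hp hp3 h₁
  have e₂ := cubicCharP_congr hp hp3 h₂
  simp only [cubicCharP_mul hp hp3, cubicCharP_pow hp hp3, cubicCharP_one hp hp3] at e₁ e₂
  have h3 := (cubicCharP_spec hp hp3 hp3).1
  have hm3 := (cubicCharP_spec hp hp3 fun h => hp.not_isUnit (hm.isUnit_of_dvd' h dvd_rfl)).1
  linear_combination -(cubicCharP p w * cubicCharP p y) * e₂ + cubicCharP p (invMod (p ^ k) b) *
    (e₁ - cubicCharP p b * cubicCharP p w * cubicCharP p y * h3 + hm3)

lemma cubicCharP_pow_mul_Sig_self {k : ℕ} (hk : k ≠ 0) (hA : IsCoprime (3 ^ 3 * b * w) p)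
    (hb : IsCoprime b p) (hm : IsCoprime m p) :
    ((cubicCharP p w ^ k : OK) : ℂ) * Sig p m b w k k =
      ((cubicCharP p (invMod (p ^ k) b) ^ k : OK) : ℂ) *
        eC (((m ^ 3 * invMod (p ^ k) (3 ^ 3 * b * w) : OK) : ℂ) / ((p ^ k : OK) : ℂ)) := by
  rw [Sig, finsum_units_ite_dvd_mul_sub hA.pow_right hm.pow_left.pow_right
    (F := fun x => ((cubicCharP p x ^ k : OK) : ℂ) * eC ((x : ℂ) / ((p ^ k : OK) : ℂ)))
    fun x y h => cubicCharP_pow_mul_eC_congr hp hp3 h, ← mul_assoc, ← Subring.coe_mul, ← mul_pow,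
    cubicCharP_mul_cubicCharP_invMod hp hp3 hk hA hb hm]

end RestrictedSums

theorem stmt12_general (p m b w : OK) (hp : Prime p) (hp3 : (3 : OK) ∣ p - 1)
    (k : ℕ) (hco : IsCoprime (m * b * w) p) :
    (1 < k →
      (∀ r : ℕ, r < k → Sig p m b w k r = 0) ∧
      ((cubicCharP p w ^ k : OK) : ℂ) *
          ∑ r ∈ Finset.range (k + 1),
            (moebius (p ^ (k - r)) : ℂ) * (Nm (p ^ r) : ℂ) * Sig p m b w k r =
        (Nm (p ^ k) : ℂ) * ((cubicCharP p (invMod (p ^ k) b) ^ k : OK) : ℂ) *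
          eC (((m ^ 3 * invMod (p ^ k) (3 ^ 3 * b * w) : OK) : ℂ) / ((p ^ k : OK) : ℂ))) ∧
    (k = 1 →
      ((cubicCharP p w : OK) : ℂ) *
          ∑ r ∈ Finset.range 2,
            (moebius (p ^ (1 - r)) : ℂ) * (Nm (p ^ r) : ℂ) * Sig p m b w 1 r =
        (Nm p : ℂ) * ((cubicCharP p (invMod p b) : OK) : ℂ) *
            eC (((m ^ 3 * invMod p (3 ^ 3 * b * w) : OK) : ℂ) / (p : ℂ)) +
          ((cubicCharP p w : OK) : ℂ) * (moebius p : ℂ) * gaussSum 1 p) := by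
  have h3 : IsCoprime (3 : OK) p := by
    obtain ⟨t, ht⟩ := hp3
    exact ⟨-t, 1, by linear_combination ht⟩
  have hp_three : ¬p ∣ 3 := fun h => hp.not_isUnit (h3.isUnit_of_dvd' h dvd_rfl)
  have hm : IsCoprime m p := hco.of_mul_left_left.of_mul_left_left
  have hb : IsCoprime b p := hco.of_mul_left_left.of_mul_left_right
  have hA : IsCoprime (3 ^ 3 * b * w) p := (h3.pow_left.mul_left hb).mul_left hco.of_mul_left_right
  have hmain := fun (n : ℕ) (hn : n ≠ 0) => cubicCharP_pow_mul_Sig_self hp hp_three hn hA hb hm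
  refine ⟨fun hk => ⟨fun r hr => Sig_eq_zero_of_lt hp hp_three hk hr, ?_⟩, fun _ => ?_⟩
  · rw [Finset.sum_eq_single_of_mem k (Finset.self_mem_range_succ k) fun r hr hrk =>
      by rw [Sig_eq_zero_of_lt hp hp_three hk (by simp at hr; omega), mul_zero],
      Nat.sub_self, pow_zero, moebius_one, Int.cast_one, one_mul, mul_left_comm,
      hmain k (by omega)]
    ring
  · rw [Finset.sum_range_succ, Finset.sum_range_one, Nat.sub_zero, Nat.sub_self, pow_zero,
      moebius_one, Nm_one, pow_one]
    have h₀ : Sig p m b w 1 0 = gaussSum 1 p := by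
      rw [Sig, gaussSum, pow_one]
      simp [cubicChar_of_prime hp]
    have h₁ := hmain 1 one_ne_zero
    simp only [pow_one] at h₁
    rw [h₀]
    push_cast
    linear_combination (Nm p : ℂ) * h₁

theorem stmt12 (p m b w : OK) (hp : Prime p) (hp3 : (3 : OK) ∣ p - 1)
    (k : ℕ) (hk : 1 ≤ k) (hco : IsCoprime (m * b * w) p) :
    (1 < k →
      (∀ r : ℕ, r < k → Sig p m b w k r = 0) ∧
      ((cubicCharP p w ^ k : OK) : ℂ) *
          ∑ r ∈ Finset.range (k + 1),
            (moebius (p ^ (k - r)) : ℂ) * (Nm (p ^ r) : ℂ) * Sig p m b w k r =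
        (Nm (p ^ k) : ℂ) * ((cubicCharP p (invMod (p ^ k) b) ^ k : OK) : ℂ) *
          eC (((m ^ 3 * invMod (p ^ k) (3 ^ 3 * b * w) : OK) : ℂ) / ((p ^ k : OK) : ℂ))) ∧
    (k = 1 →
      ((cubicCharP p w : OK) : ℂ) *
          ∑ r ∈ Finset.range 2,
            (moebius (p ^ (1 - r)) : ℂ) * (Nm (p ^ r) : ℂ) * Sig p m b w 1 r =
        (Nm p : ℂ) * ((cubicCharP p (invMod p b) : OK) : ℂ) *
            eC (((m ^ 3 * invMod p (3 ^ 3 * b * w) : OK) : ℂ) / (p : ℂ)) +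
          ((cubicCharP p w : OK) : ℂ) * (moebius p : ℂ) * gaussSum 1 p) :=
  stmt12_general p m b w hp hp3 k hco

end CubicSeries
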